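/- arXiv:2303.08214 — 3 statements merged into one kernel-verified Lean document; each statement's English description precedes it below -/
import Mathlib

section
/- Let H be an even unimodular lattice and e ∈ H primitive isotropic. Every isometry g of H_ℚ that fixes e and acts trivially on (e^⊥/ℤe)_ℚ is of the form E(e∧γ) for some γ ∈ e^⊥_ℚ; moreover g preserves the lattice H if and only if the image of γ in (e^⊥/ℤe)_ℚ lies in e^⊥/ℤe. -/
/-!
Pick `f ∈ L` with `B e f = 1`: the values `B e x`, `x ∈ L`, form an ideal `dℤ`, unimodularity
puts `e / d` in `L`, and primitivity of `e` forces `d = ±1`. Put `γ = g f - f`. Every `x` is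
`y + B x e • f` with `y ∈ e^⊥`, and `g y = y + c • e`; the constant `c` and the value of
`B γ γ` are read off from `g` being an isometry, which gives `g = E(e∧γ)`. Conversely, `E(e∧γ)`
only depends on `γ` modulo `ℚe`, and for `γ ∈ L` all its coefficients are integers, the last
one `B γ γ / 2` because `L` is even.
-/

variable {V : Type*} [AddCommGroup V] [Module ℚ V] (B : V →ₗ[ℚ] V →ₗ[ℚ] ℚ)

def eichlerTransvection (e γ x : V) : V :=
  x + B x e • γ - B x γ • e - (B γ γ / 2 * B x e) • e

section Lattice

variable (L : Submodule ℤ V)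

def pairingIdeal (v : V) : Ideal ℤ :=
  (LinearMap.range ((B v).restrictScalars ℤ ∘ₗ L.subtype)).comap (Algebra.linearMap ℤ ℚ)

lemma mem_pairingIdeal {v : V} {k : ℤ} : k ∈ pairingIdeal B L v ↔ ∃ x ∈ L, B v x = k := by
  simp [pairingIdeal, eq_comm]

lemma smul_mem_of_eq_intCast {q : ℚ} (hq : ∃ k : ℤ, q = k) {v : V} (hv : v ∈ L) : q • v ∈ L := by
  obtain ⟨k, rfl⟩ := hq
  rw [Int.cast_smul_eq_zsmul]
  exact L.smul_mem k hv

lemma inv_smul_mem_of_forall_pairing_dvd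
    (hunimod : ∀ v : V, (∀ x ∈ L, ∃ k : ℤ, B v x = (k : ℚ)) → v ∈ L)
    {v : V} {d : ℤ} (hd : d ≠ 0) (hdvd : ∀ x ∈ L, ∃ a : ℤ, B v x = a * d) :
    (d : ℚ)⁻¹ • v ∈ L := by
  refine hunimod _ fun x hx => ?_
  obtain ⟨a, ha⟩ := hdvd x hx
  refine ⟨a, ?_⟩
  rw [map_smul, LinearMap.smul_apply, ha, smul_eq_mul]
  field_simp

lemma exists_mem_pairing_eq_one
    (hnondeg : ∀ v : V, (∀ x : V, B v x = 0) → v = 0)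
    (hfull : Submodule.span ℚ (L : Set V) = ⊤)
    (hint : ∀ x ∈ L, ∀ y ∈ L, ∃ k : ℤ, B x y = (k : ℚ))
    (hunimod : ∀ v : V, (∀ x ∈ L, ∃ k : ℤ, B v x = (k : ℚ)) → v ∈ L)
    {e : V} (heL : e ∈ L) (hne : e ≠ 0)
    (hprim : ∀ (c : ℤ), ∀ x ∈ L, e = c • x → IsUnit c) :
    ∃ f ∈ L, B e f = 1 := by
  set d := Submodule.IsPrincipal.generator (pairingIdeal B L e)
  have hdvd : ∀ x ∈ L, ∃ a : ℤ, B e x = a * d := by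
    intro x hx
    obtain ⟨k, hk⟩ := hint e heL x hx
    obtain ⟨a, rfl⟩ := (Submodule.IsPrincipal.mem_iff_eq_smul_generator _).1
      ((mem_pairingIdeal B L).2 ⟨x, hx, hk⟩)
    exact ⟨a, by rw [hk, smul_eq_mul, Int.cast_mul]⟩
  have hd : d ≠ 0 := by
    intro hd0
    refine hne (hnondeg e fun x => ?_)
    have hBe : B e = 0 := LinearMap.ext_on hfull fun y hy => by
      obtain ⟨a, ha⟩ := hdvd y hy
      simp [ha, hd0]
    simp [hBe]
  have hd_unit : IsUnit d := hprim d _ (inv_smul_mem_of_forall_pairing_dvd B L hunimod hd hdvd)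
    (by rw [← Int.cast_smul_eq_zsmul ℚ, smul_inv_smul₀ (Int.cast_ne_zero.2 hd)])
  obtain ⟨x₀, hx₀L, hx₀⟩ := (mem_pairingIdeal B L).1 (Submodule.IsPrincipal.generator_mem _)
  refine ⟨d • x₀, L.smul_mem d hx₀L, ?_⟩
  rw [← Int.cast_smul_eq_zsmul ℚ, map_smul, smul_eq_mul, hx₀]
  exact_mod_cast Int.isUnit_mul_self hd_unit

lemma eichlerTransvection_mem
    (hint : ∀ x ∈ L, ∀ y ∈ L, ∃ k : ℤ, B x y = (k : ℚ))
    (heven : ∀ x ∈ L, ∃ k : ℤ, B x x = 2 * (k : ℚ))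
    {e γ x : V} (heL : e ∈ L) (hγ : γ ∈ L) (hx : x ∈ L) :
    eichlerTransvection B e γ x ∈ L := by
  obtain ⟨m, hm⟩ := heven γ hγ
  have hhalf : ∃ k : ℤ, B γ γ / 2 * B x e = k := by
    obtain ⟨k, hk⟩ := hint x hx e heL
    exact ⟨m * k, by rw [hm, hk]; push_cast; ring⟩
  exact L.sub_mem (L.sub_mem (L.add_mem hx (smul_mem_of_eq_intCast L (hint x hx e heL) hγ))
    (smul_mem_of_eq_intCast L (hint x hx γ hγ) heL)) (smul_mem_of_eq_intCast L hhalf heL)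

end Lattice

lemma eichlerTransvection_add_smul (hsymm : ∀ x y : V, B x y = B y x)
    {e γ : V} (he : B e e = 0) (hγe : B γ e = 0) (c : ℚ) :
    eichlerTransvection B e (γ + c • e) = eichlerTransvection B e γ := by
  have heγ : B e γ = 0 := by rw [hsymm]; exact hγe
  funext x
  simp only [eichlerTransvection, map_add, map_smul, LinearMap.add_apply, LinearMap.smul_apply,
    smul_eq_mul, he, hγe, heγ]
  module

section Isometry

variable (hsymm : ∀ x y : V, B x y = B y x)
  (g : V ≃ₗ[ℚ] V) (hg : ∀ x y : V, B (g x) (g y) = B x y)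
  {e : V} (hge : g e = e)
  (htriv : ∀ x : V, B x e = 0 → ∃ c : ℚ, g x = x + c • e)

include hg hge in
lemma pairing_apply_sub_self (f : V) : B (g f - f) e = 0 := by
  have h := hg f e
  rw [hge] at h
  rw [map_sub, LinearMap.sub_apply, h, sub_self]

include hsymm hg hge htriv in
lemma apply_of_pairing_eq_zero {f : V} (hef : B e f = 1) {y : V} (hy : B y e = 0) :
    g y = y - B y (g f - f) • e := by
  have heγ : B e (g f - f) = 0 := by rw [hsymm]; exact pairing_apply_sub_self B g hg hge f
  obtain ⟨c, hc⟩ := htriv y hy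
  have hpair := hg y f
  rw [hc, ← add_sub_cancel f (g f)] at hpair
  simp only [map_add, map_smul, LinearMap.add_apply, LinearMap.smul_apply, smul_eq_mul,
    hef, heγ] at hpair
  have hc' : c = -B y (g f - f) := by linarith
  rw [hc, hc', neg_smul, ← sub_eq_add_neg]

include hsymm hg hge htriv in
theorem eq_eichlerTransvection {f : V} (hef : B e f = 1) (x : V) :
    g x = eichlerTransvection B e (g f - f) x := by
  set γ := g f - f
  set a := B x e
  have hfe : B f e = 1 := by rw [hsymm]; exact hef
  have hgf : g f = f + γ := (add_sub_cancel f (g f)).symm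
  have hγγ : B γ γ / 2 = -B f γ := by
    have h := hg f f
    rw [hgf] at h
    simp only [map_add, LinearMap.add_apply, hsymm γ f] at h
    linarith
  have hy : B (x - a • f) e = 0 := by simp [a, hfe]
  have hgx : g x = (x - a • f) - B (x - a • f) γ • e + a • (f + γ) := by
    rw [← apply_of_pairing_eq_zero B hsymm g hg hge htriv hef hy, ← hgf, ← map_smul, ← map_add,
      sub_add_cancel]
  rw [hgx, eichlerTransvection, hγγ]
  simp only [map_sub, map_smul, LinearMap.sub_apply, LinearMap.smul_apply, smul_eq_mul]
  module

end Isometry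

theorem rational_isometry_trivial_on_quotient_is_eichler_general
    (V : Type) [AddCommGroup V] [Module ℚ V]
    (B : V →ₗ[ℚ] V →ₗ[ℚ] ℚ)
    (hsymm : ∀ x y : V, B x y = B y x)
    (hnondeg : ∀ v : V, (∀ x : V, B v x = 0) → v = 0)
    (L : Submodule ℤ V)
    (hfull : Submodule.span ℚ (L : Set V) = ⊤)
    (hint : ∀ x ∈ L, ∀ y ∈ L, ∃ k : ℤ, B x y = (k : ℚ))
    (heven : ∀ x ∈ L, ∃ k : ℤ, B x x = 2 * (k : ℚ))
    (hunimod : ∀ v : V, (∀ x ∈ L, ∃ k : ℤ, B v x = (k : ℚ)) → v ∈ L)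
    (e : V) (heL : e ∈ L) (he : B e e = 0) (hne : e ≠ 0)
    (hprim : ∀ (c : ℤ), ∀ x ∈ L, e = c • x → IsUnit c)
    (g : V ≃ₗ[ℚ] V)
    (hg : ∀ x y : V, B (g x) (g y) = B x y)
    (hge : g e = e)
    (htriv : ∀ x : V, B x e = 0 → ∃ c : ℚ, g x = x + c • e) :
    ∃ γ : V, B γ e = 0 ∧
      (∀ x : V, g x =
        x + (B x e) • γ - (B x γ) • e - ((B γ γ / 2) * (B x e)) • e) ∧
      ((∀ x ∈ L, g x ∈ L) ↔ ∃ γ₀ ∈ L, B γ₀ e = 0 ∧ ∃ c : ℚ, γ = γ₀ + c • e) := by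
  obtain ⟨f, hfL, hef⟩ := exists_mem_pairing_eq_one B L hnondeg hfull hint hunimod heL hne hprim
  have hform := eq_eichlerTransvection B hsymm g hg hge htriv hef
  have hγe := pairing_apply_sub_self B g hg hge f
  refine ⟨g f - f, hγe, hform, fun hL => ⟨g f - f, L.sub_mem (hL f hfL) hfL, hγe, 0, by simp⟩, ?_⟩
  rintro ⟨γ₀, hγ₀L, hγ₀e, c, hγ⟩ x hx
  rw [hform, hγ, eichlerTransvection_add_smul B hsymm he hγ₀e]
  exact eichlerTransvection_mem B L hint heven heL hγ₀L hx

/-- Let `H` be an even unimodular lattice (here a full lattice `L` in a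
rational quadratic space `V = H_ℚ`) and `e ∈ L` primitive isotropic.  Every isometry `g` of
`H_ℚ` that fixes `e` and acts trivially on `(e^⊥/ℤe)_ℚ` is of the form `E(e∧γ)` for some
`γ ∈ e^⊥_ℚ`; moreover `g` preserves the lattice `H` if and only if the image of `γ` in
`(e^⊥/ℤe)_ℚ` lies in `e^⊥/ℤe` (i.e. `γ` is congruent mod `ℚe` to a lattice vector in
`e^⊥`). -/
theorem rational_isometry_trivial_on_quotient_is_eichler
    (V : Type) [AddCommGroup V] [Module ℚ V]
    (B : V →ₗ[ℚ] V →ₗ[ℚ] ℚ)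
    (hsymm : ∀ x y : V, B x y = B y x)
    (hnondeg : ∀ v : V, (∀ x : V, B v x = 0) → v = 0)
    (L : Submodule ℤ V)
    (hfull : Submodule.span ℚ (L : Set V) = ⊤)
    (n : ℕ) (b : Module.Basis (Fin n) ℤ L)
    (hint : ∀ x ∈ L, ∀ y ∈ L, ∃ k : ℤ, B x y = (k : ℚ))
    (heven : ∀ x ∈ L, ∃ k : ℤ, B x x = 2 * (k : ℚ))
    (hunimod : ∀ v : V, (∀ x ∈ L, ∃ k : ℤ, B v x = (k : ℚ)) → v ∈ L)
    (e : V) (heL : e ∈ L) (he : B e e = 0) (hne : e ≠ 0)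
    (hprim : ∀ (c : ℤ), ∀ x ∈ L, e = c • x → IsUnit c)
    (g : V ≃ₗ[ℚ] V)
    (hg : ∀ x y : V, B (g x) (g y) = B x y)
    (hge : g e = e)
    (htriv : ∀ x : V, B x e = 0 → ∃ c : ℚ, g x = x + c • e) :
    ∃ γ : V, B γ e = 0 ∧
      (∀ x : V, g x =
        x + (B x e) • γ - (B x γ) • e - ((B γ γ / 2) * (B x e)) • e) ∧
      ((∀ x ∈ L, g x ∈ L) ↔ ∃ γ₀ ∈ L, B γ₀ e = 0 ∧ ∃ c : ℚ, γ = γ₀ + c • e) :=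
  rational_isometry_trivial_on_quotient_is_eichler_general V B hsymm hnondeg L hfull hint heven
    hunimod e heL he hne hprim g hg hge htriv
end

section
/- Let H be an even unimodular lattice, e primitive isotropic, and α, α' ∈ e^⊥ with α·α = α'·α' = −2 and α − α' ∈ ℤe. Then there exists γ ∈ e^⊥ with E(e∧γ)(α) = α'. -/
/-!
Since `α ⊥ e`, `E(e∧γ) α = α − (α·γ) e`, so it suffices to find `γ ∈ e^⊥` with
`α·γ = 1` and replace it by `m γ`. In a unimodular lattice every primitive `v` has some `w`
with `v·w = 1`: the coordinates of `v` are integral combinations of the values `v·b_j`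
(through the inverse Gram matrix), so they are divisible by the generator of the ideal `v·H`.
Pick `f` with `e·f = 1`. The vector `β = α − (α·f) e` still has `β·β = −2`, which is
squarefree, so `β` is primitive; if `β·w = 1`, then `γ = w − (e·w) f` lies in `e^⊥` and
`α·γ = β·w = 1`.
-/

/-- The Eichler transformation `E(e∧γ)` of an even lattice,
`x ↦ x + (x·e)γ − (x·γ)e − (1/2)(γ·γ)(x·e)e`. -/
def eichler {H : Type} [AddCommGroup H] [Module ℤ H]
    (B : H →ₗ[ℤ] H →ₗ[ℤ] ℤ) (e γ : H) (x : H) : H :=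
  x + (B x e) • γ - (B x γ) • e - ((B γ γ / 2) * (B x e)) • e

section
variable {H : Type} [AddCommGroup H] [Module ℤ H] (B : H →ₗ[ℤ] H →ₗ[ℤ] ℤ)

theorem isUnit_of_eq_smul_of_squarefree {v : H} (hv : Squarefree (B v v)) {c : ℤ} {x : H}
    (h : v = c • x) : IsUnit c :=
  hv c ⟨B x x, by simp only [h, map_zsmul, LinearMap.smul_apply, smul_eq_mul]; ring⟩

theorem eichler_apply_of_apply_eq_zero {e x : H} (γ : H) (hx : B x e = 0) :
    eichler B e γ x = x - B x γ • e := by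
  simp [eichler, hx]

variable {n : ℕ} (b : Module.Basis (Fin n) ℤ H)

theorem exists_eq_smul_of_forall_dvd_apply
    (hunimod : IsUnit (Matrix.of fun i j => B (b i) (b j)).det) {v : H} {d : ℤ}
    (hd : ∀ w, d ∣ B v w) : ∃ x, v = d • x := by
  set M : Matrix (Fin n) (Fin n) ℤ := Matrix.of fun i j => B (b i) (b j)
  have hvM : Matrix.vecMul (b.equivFun v) M = fun j => B v (b j) := by
    ext j
    conv_rhs => rw [← b.sum_equivFun v]
    simp only [map_sum, LinearMap.sum_apply, LinearMap.map_smul, LinearMap.smul_apply,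
      smul_eq_mul, M, Matrix.vecMul, dotProduct, Matrix.of_apply]
  have hcoord : ∀ i, d ∣ b.equivFun v i := by
    intro i
    rw [← Matrix.vecMul_one (b.equivFun v), ← M.mul_nonsing_inv hunimod,
      ← Matrix.vecMul_vecMul, hvM, Matrix.vecMul, dotProduct]
    exact Finset.dvd_sum fun j _ => (hd (b j)).mul_right _
  choose g hg using hcoord
  refine ⟨b.equivFun.symm g, b.equivFun.injective ?_⟩
  ext i
  rw [map_zsmul, LinearEquiv.apply_symm_apply, Pi.smul_apply, smul_eq_mul, hg]

theorem exists_apply_eq_one_of_primitive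
    (hunimod : IsUnit (Matrix.of fun i j => B (b i) (b j)).det) {v : H}
    (hv : ∀ (c : ℤ) (x : H), v = c • x → IsUnit c) : ∃ w, B v w = 1 := by
  obtain ⟨d, hd⟩ := (IsPrincipalIdealRing.principal (LinearMap.range (B v))).principal
  obtain ⟨w, hw⟩ : d ∈ LinearMap.range (B v) := hd ▸ Submodule.mem_span_singleton_self d
  have hdvd : ∀ w, d ∣ B v w := fun w => by
    obtain ⟨a, ha⟩ := Submodule.mem_span_singleton.mp (hd ▸ LinearMap.mem_range_self (B v) w)
    exact ⟨a, by rw [← ha, smul_eq_mul, mul_comm]⟩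
  obtain ⟨x, hx⟩ := exists_eq_smul_of_forall_dvd_apply B b hunimod hdvd
  exact ⟨d • w, by rw [map_zsmul, hw, smul_eq_mul, Int.isUnit_mul_self (hv d x hx)]⟩

theorem exists_apply_eq_zero_and_apply_eq_one
    (hunimod : IsUnit (Matrix.of fun i j => B (b i) (b j)).det)
    (hsymm : ∀ x y : H, B x y = B y x) {e α : H}
    (he : B e e = 0) (hprim : ∀ (c : ℤ) (x : H), e = c • x → IsUnit c)
    (hαe : B α e = 0) (hα : Squarefree (B α α)) : ∃ γ, B γ e = 0 ∧ B α γ = 1 := by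
  obtain ⟨f, hf⟩ := exists_apply_eq_one_of_primitive B b hunimod hprim
  set β := α - B α f • e
  have hββ : B β β = B α α := by
    simp only [β, map_sub, map_zsmul, LinearMap.sub_apply, LinearMap.smul_apply, smul_eq_mul,
      hαe, he, hsymm e α]
    ring
  obtain ⟨w, hw⟩ := exists_apply_eq_one_of_primitive B b hunimod fun _ _ =>
    isUnit_of_eq_smul_of_squarefree B (hββ ▸ hα)
  refine ⟨w - B e w • f, ?_, ?_⟩
  · rw [hsymm, map_sub, map_zsmul, hf, smul_eq_mul, mul_one, sub_self]
  · simp only [β, map_sub, map_zsmul, LinearMap.sub_apply, LinearMap.smul_apply,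
      smul_eq_mul] at hw ⊢
    linarith

end

theorem eichler_transitive_on_minus_two_vectors_over_quotient_general
    (H : Type) [AddCommGroup H] [Module ℤ H]
    (B : H →ₗ[ℤ] H →ₗ[ℤ] ℤ)
    (hsymm : ∀ x y : H, B x y = B y x)
    (n : ℕ) (b : Module.Basis (Fin n) ℤ H)
    (hunimod : IsUnit (Matrix.of fun i j => B (b i) (b j)).det)
    (e : H) (he : B e e = 0)
    (hprim : ∀ (c : ℤ) (x : H), e = c • x → IsUnit c)
    (α α' : H) (hα : B α α = -2)
    (hαe : B α e = 0)
    (hdiff : ∃ m : ℤ, α - α' = m • e) :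
    ∃ γ : H, B γ e = 0 ∧ eichler B e γ α = α' := by
  obtain ⟨m, hm⟩ := hdiff
  obtain ⟨γ, hγe, hαγ⟩ := exists_apply_eq_zero_and_apply_eq_one B b hunimod hsymm he hprim hαe
    (hα ▸ Int.squarefree_natAbs.mp Nat.squarefree_two)
  refine ⟨m • γ, by rw [map_zsmul, LinearMap.smul_apply, hγe, smul_zero], ?_⟩
  rw [eichler_apply_of_apply_eq_zero B _ hαe, map_zsmul, hαγ, smul_eq_mul, mul_one, ← hm,
    sub_sub_cancel]

/-- Let `H` be an even unimodular lattice, `e` primitive isotropic, and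
`α, α' ∈ e^⊥` with `α·α = α'·α' = −2` and `α − α' ∈ ℤe`.  Then some Eichler transformation
`E(e∧γ)` with `γ ∈ e^⊥` takes `α` to `α'`. -/
theorem eichler_transitive_on_minus_two_vectors_over_quotient
    (H : Type) [AddCommGroup H] [Module ℤ H]
    (B : H →ₗ[ℤ] H →ₗ[ℤ] ℤ)
    (hsymm : ∀ x y : H, B x y = B y x)
    (heven : ∀ x : H, Even (B x x))
    (n : ℕ) (b : Module.Basis (Fin n) ℤ H)
    (hunimod : IsUnit (Matrix.of fun i j => B (b i) (b j)).det)
    (e : H) (he : B e e = 0) (hne : e ≠ 0)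
    (hprim : ∀ (c : ℤ) (x : H), e = c • x → IsUnit c)
    (α α' : H) (hα : B α α = -2) (hα' : B α' α' = -2)
    (hαe : B α e = 0) (hα'e : B α' e = 0)
    (hdiff : ∃ m : ℤ, α - α' = m • e) :
    ∃ γ : H, B γ e = 0 ∧ eichler B e γ α = α' :=
  eichler_transitive_on_minus_two_vectors_over_quotient_general H B hsymm n b hunimod e he hprim α
    α' hα hαe hdiff
end

section
/- Let H be the K3 lattice (even unimodular of signature (3,19)), e primitive isotropic, and let K = {κ ∈ H_ℝ : κ·e > 0, κ·κ = 2}. Then the map κ ↦ κ·e from K to ℝ_{>0} is surjective, and the group H(e)_ℝ acting via real Eichler transformations E(e∧γ) preserves each level set {κ ∈ K : κ·e = c} and acts simply transitively on it; i.e., K is an H(e)_ℝ-torsor over ℝ_{>0}. -/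
/-!
Since `e` is isotropic and `B` is nondegenerate, there is `f` with `f·e = 1`, and the plane
`ℝf + ℝe` already meets every level set of `K`. The Eichler transformations fix `e` and move
`κ` by `(κ·e)γ` modulo `ℝe`; so once `κ·e ≠ 0`, the vector `γ = (κ' - κ)/(κ·e)` carries `κ` to
`κ'` whenever `κ'` has the same level and norm, and `E(e∧γ)κ = κ` forces `γ ∈ ℝe`.
-/

/-- The real Eichler transformation `E(e∧γ)` on `H_ℝ`:
`κ ↦ κ + (κ·e)γ − (κ·γ)e − (1/2)(γ·γ)(κ·e)e`. -/
noncomputable def eichlerR {V : Type} [AddCommGroup V] [Module ℝ V]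
    (B : V →ₗ[ℝ] V →ₗ[ℝ] ℝ) (e γ : V) (κ : V) : V :=
  κ + (B κ e) • γ - (B κ γ) • e - ((B γ γ / 2) * (B κ e)) • e

theorem LinearMap.SeparatingRight.exists_apply_eq_one {K M N : Type*} [Field K]
    [AddCommGroup M] [Module K M] [AddCommGroup N] [Module K N] {B : M →ₗ[K] N →ₗ[K] K}
    (hB : B.SeparatingRight) {e : N} (he : e ≠ 0) : ∃ f, B f e = 1 := by
  obtain ⟨x, hx⟩ : ∃ x, B x e ≠ 0 := by
    by_contra! h
    exact he (hB e h)
  exact ⟨(B x e)⁻¹ • x, by rw [map_smul, LinearMap.smul_apply, smul_eq_mul, inv_mul_cancel₀ hx]⟩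

section Eichler

variable {V : Type} [AddCommGroup V] [Module ℝ V] (B : V →ₗ[ℝ] V →ₗ[ℝ] ℝ) {e γ κ : V}

theorem eichlerR_sub_self (e γ κ : V) :
    eichlerR B e γ κ - κ = B κ e • γ - (B κ γ + B γ γ / 2 * B κ e) • e := by
  unfold eichlerR
  module

theorem eichlerR_apply_right (he : B e e = 0) (hγ : B γ e = 0) :
    B (eichlerR B e γ κ) e = B κ e := by
  simp only [eichlerR, map_add, map_sub, map_smul, LinearMap.add_apply, LinearMap.sub_apply,
    LinearMap.smul_apply, smul_eq_mul, hγ, he]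
  ring

theorem eichlerR_apply_self (hsymm : ∀ x y : V, B x y = B y x) (he : B e e = 0)
    (hγ : B γ e = 0) : B (eichlerR B e γ κ) (eichlerR B e γ κ) = B κ κ := by
  simp only [eichlerR, map_add, map_sub, map_smul, LinearMap.add_apply, LinearMap.sub_apply,
    LinearMap.smul_apply, smul_eq_mul, hγ, he, hsymm e γ, hsymm γ κ, hsymm e κ]
  ring

theorem exists_apply_right_eq_and_apply_self_eq (hsymm : ∀ x y : V, B x y = B y x)
    (he : B e e = 0) {f : V} (hf : B f e = 1) {c : ℝ} (hc : c ≠ 0) (q : ℝ) :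
    ∃ κ, B κ e = c ∧ B κ κ = q := by
  refine ⟨c • f + ((q - c ^ 2 * B f f) / (2 * c)) • e, ?_, ?_⟩
  · simp only [map_add, map_smul, LinearMap.add_apply, LinearMap.smul_apply, smul_eq_mul, hf, he]
    ring
  · simp only [map_add, map_smul, LinearMap.add_apply, LinearMap.smul_apply, smul_eq_mul, hf, he,
      hsymm e f]
    field_simp
    ring

theorem exists_eichlerR_eq (hsymm : ∀ x y : V, B x y = B y x) {κ' : V}
    (hnorm : B κ κ = B κ' κ') (hlevel : B κ e = B κ' e) (hκ : B κ e ≠ 0) :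
    ∃ γ, B γ e = 0 ∧ eichlerR B e γ κ = κ' := by
  refine ⟨(B κ e)⁻¹ • (κ' - κ), ?_, ?_⟩
  · rw [map_smul, map_sub, LinearMap.smul_apply, LinearMap.sub_apply, ← hlevel, sub_self,
      smul_zero]
  · have hcoeff : B κ ((B κ e)⁻¹ • (κ' - κ)) +
        B ((B κ e)⁻¹ • (κ' - κ)) ((B κ e)⁻¹ • (κ' - κ)) / 2 * B κ e = 0 := by
      simp only [map_smul, map_sub, LinearMap.smul_apply, LinearMap.sub_apply, smul_eq_mul,
        hsymm κ' κ, ← hnorm]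
      field_simp
      ring
    rw [← sub_eq_zero, ← sub_add_sub_cancel _ κ, eichlerR_sub_self, hcoeff, smul_smul,
      mul_inv_cancel₀ hκ]
    module

theorem exists_eq_smul_of_eichlerR_eq_self (hfix : eichlerR B e γ κ = κ) (hκ : B κ e ≠ 0) :
    ∃ c : ℝ, γ = c • e := by
  have hsub := eichlerR_sub_self B e γ κ
  rw [hfix, sub_self, eq_comm, sub_eq_zero] at hsub
  refine ⟨(B κ e)⁻¹ * (B κ γ + B γ γ / 2 * B κ e), ?_⟩
  rw [mul_smul, ← hsub, smul_smul, inv_mul_cancel₀ hκ, one_smul]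

end Eichler

/-- Let `H_ℝ` have signature `(3,19)` and `e` be isotropic and nonzero, and
let `K = {κ : κ·e > 0, κ·κ = 2}`.  Then `κ ↦ κ·e` maps `K` onto `ℝ_{>0}`, the real Eichler
transformations `E(e∧γ)` (`γ ∈ e^⊥_ℝ`) preserve each level set `{κ ∈ K : κ·e = c}`, act
transitively on it, and act on it with stabilizer `ℝe`; i.e. `K` is an
`H(e)_ℝ = e^⊥_ℝ/ℝe`-torsor over `ℝ_{>0}`. -/
theorem K_is_torsor_over_positive_reals
    (V : Type) [AddCommGroup V] [Module ℝ V]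
    (B : V →ₗ[ℝ] V →ₗ[ℝ] ℝ)
    (hsymm : ∀ x y : V, B x y = B y x)
    (b : Module.Basis (Fin 22) ℝ V)
    (hb : ∀ i j, B (b i) (b j) =
      if i = j then (if (i : ℕ) < 3 then (1 : ℝ) else -1) else 0)
    (e : V) (he : B e e = 0) (hne : e ≠ 0) :
    (∀ c : ℝ, 0 < c → ∃ κ : V, B κ e = c ∧ B κ κ = 2) ∧
    (∀ γ : V, B γ e = 0 → ∀ κ : V,
      B (eichlerR B e γ κ) e = B κ e ∧ B (eichlerR B e γ κ) (eichlerR B e γ κ) = B κ κ) ∧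
    (∀ κ κ' : V, B κ κ = 2 → B κ' κ' = 2 → 0 < B κ e → B κ e = B κ' e →
      ∃ γ : V, B γ e = 0 ∧ eichlerR B e γ κ = κ') ∧
    (∀ γ : V, B γ e = 0 → ∀ κ : V, B κ κ = 2 → 0 < B κ e →
      eichlerR B e γ κ = κ → ∃ c : ℝ, γ = c • e) := by
  have hsep : B.SeparatingRight :=
    LinearMap.IsOrthoᵢ.separatingRight_iff_not_isOrtho_basis_self b
      (fun i j hij => by simp [Function.onFun, hb, hij])
      (fun i => by rw [hb, if_pos rfl]; split_ifs <;> norm_num)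
  obtain ⟨f, hf⟩ := hsep.exists_apply_eq_one hne
  refine ⟨fun c hc => exists_apply_right_eq_and_apply_self_eq B hsymm he hf hc.ne' 2,
    fun γ hγ κ => ⟨eichlerR_apply_right B he hγ, eichlerR_apply_self B hsymm he hγ⟩,
    fun κ κ' hκ hκ' hpos hlevel => exists_eichlerR_eq B hsymm (hκ.trans hκ'.symm) hlevel hpos.ne',
    fun γ _ κ _ hpos hfix => exists_eq_smul_of_eichlerR_eq_self B hfix hpos.ne'⟩
end
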